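/- arXiv:2310.20361 — 2 statements merged into one kernel-verified Lean document; each statement's English description precedes it below -/
import Mathlib

section
/- For every real number k ≥ 1 and every real number x, one has k·(exp(x) − 1 − x) ≤ exp(k·x) − 1 − k·x. -/
/-- For every real `k ≥ 1` and every real `x`,
`k·(exp x − 1 − x) ≤ exp (k·x) − 1 − k·x`. -/
theorem stmt_1 (k x : ℝ) (hk : 1 ≤ k) :
    k * (Real.exp x - 1 - x) ≤ Real.exp (k * x) - 1 - k * x := by
  have bernoulli : 1 + k * (Real.exp x - 1) ≤ Real.exp x ^ k := by
    have hy : (-1 : ℝ) ≤ Real.exp x - 1 := by linarith [Real.exp_pos x]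
    simpa using one_add_mul_self_le_rpow_one_add hy hk
  rw [mul_comm k x, Real.exp_mul]
  linarith
end

section
/- Let (E, ℰ, φ) be a probability space, H = L²(φ), λ > 0, α ≥ 0, β ≥ 0, 0 ≤ β̃ ≤ β, C₀ ≥ 0, and let f : ℝ × H → ℝ satisfy: (a) the growth condition −α − β·|y| − λ⁻¹·j_λ(−u) ≤ f(y,u) ≤ α + β·|y| + λ⁻¹·j_λ(u) for all (y,u) ∈ ℝ × H (interpreted in [−∞,∞], trivially true when the j_λ term is infinite); (b) u ↦ f(y,u) is convex on H for each y; (c) |f(y,u) − f(y′,u)| ≤ β̃·|y − y′| for all y, y′, u; (d) f(0,u) − f(0,0) ≥ −C₀·‖u‖_{L²(φ)} for all u ∈ H. Then for every real n > C₀ and all (y,u) ∈ ℝ × H: −3α − 3β·|y| − λ⁻¹·j_λ(−u) ≤ f⁽ⁿ⁾(y,u) ≤ f(y,u) ≤ α + β·|y| + λ⁻¹·j_λ(u). -/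
/-!
Since `f y` is convex, so is its inf-convolution `f⁽ⁿ⁾(y, ·)` with `n‖·‖`, hence
`2 f⁽ⁿ⁾(y,0) ≤ f⁽ⁿ⁾(y,u) + f⁽ⁿ⁾(y,−u)`. Condition (H5), the Lipschitz bound in `y` and the growth
bound at `(0,0)` give `f(y,r) ≥ −α − β̃|y| − C₀‖r‖`, so for `n > C₀` every term of the infimum is
bounded below and `f⁽ⁿ⁾(y,0) ≥ −α − β̃|y|`. Bounding `f⁽ⁿ⁾(y,−u) ≤ f(y,−u)` by the upper growth
bound leaves `f⁽ⁿ⁾(y,u) ≥ −3α − 3β|y| − λ⁻¹ j_λ(−u)`.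
-/

open MeasureTheory Real
open scoped ENNReal

noncomputable def jlam {E : Type*} [MeasurableSpace E] (φ : Measure E) (l : ℝ) (u : E → ℝ) :
    ℝ≥0∞ :=
  ∫⁻ e, ENNReal.ofReal (exp (l * u e) - 1 - l * u e) ∂φ

lemma jlam_Lp_zero {E : Type*} [MeasurableSpace E] (φ : Measure E) (l : ℝ) (p : ℝ≥0∞) :
    jlam φ l ⇑(0 : Lp ℝ p φ) = 0 := by
  rw [jlam, ← lintegral_zero (μ := φ)]
  refine lintegral_congr_ae ?_
  filter_upwards [Lp.coeFn_zero ℝ p φ] with e he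
  rw [he]
  simp

section InfConvolution

variable {E : Type*} [NormedAddCommGroup E]

noncomputable def lipInfConv (g : E → ℝ) (n : ℝ) (u : E) : ℝ :=
  ⨅ r, g r + n * ‖u - r‖

lemma lipInfConv_le {g : E → ℝ} {n : ℝ} {u : E}
    (hbdd : BddBelow (Set.range fun r => g r + n * ‖u - r‖)) : lipInfConv g n u ≤ g u := by
  unfold lipInfConv
  simpa using ciInf_le hbdd u

lemma sub_mul_norm_le_add_mul_norm_sub {g : E → ℝ} {a C n : ℝ} (hC : 0 ≤ C) (hCn : C ≤ n)
    (hg : ∀ r, a - C * ‖r‖ ≤ g r) (u r : E) : a - C * ‖u‖ ≤ g r + n * ‖u - r‖ := by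
  have hnorm : ‖r‖ - ‖u‖ ≤ ‖u - r‖ := norm_sub_rev r u ▸ norm_sub_norm_le r u
  have hCnorm : C * (‖r‖ - ‖u‖) ≤ n * ‖u - r‖ :=
    (mul_le_mul_of_nonneg_left hnorm hC).trans (mul_le_mul_of_nonneg_right hCn (norm_nonneg _))
  linarith [hg r]

lemma convexOn_lipInfConv [NormedSpace ℝ E] {g : E → ℝ} {n : ℝ}
    (hg : ConvexOn ℝ Set.univ g) (hn : 0 ≤ n)
    (hbdd : ∀ u, BddBelow (Set.range fun r => g r + n * ‖u - r‖)) :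
    ConvexOn ℝ Set.univ (lipInfConv g n) := by
  refine ⟨convex_univ, fun u _ v _ a b ha hb hab => ?_⟩
  unfold lipInfConv
  rw [smul_eq_mul, smul_eq_mul, Real.mul_iInf_of_nonneg ha,
    Real.mul_iInf_of_nonneg hb]
  refine le_ciInf_add_ciInf fun r s => ?_
  have hnorm : ‖a • u + b • v - (a • r + b • s)‖ ≤ a * ‖u - r‖ + b * ‖v - s‖ := by
    calc ‖a • u + b • v - (a • r + b • s)‖ = ‖a • (u - r) + b • (v - s)‖ := by
          congr 1; module
      _ ≤ a * ‖u - r‖ + b * ‖v - s‖ := by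
          refine (norm_add_le _ _).trans_eq ?_
          rw [norm_smul, norm_smul, Real.norm_of_nonneg ha, Real.norm_of_nonneg hb]
  calc ⨅ r, g r + n * ‖a • u + b • v - r‖
      ≤ g (a • r + b • s) + n * ‖a • u + b • v - (a • r + b • s)‖ := ciInf_le (hbdd _) _
    _ ≤ (a * g r + b * g s) + n * (a * ‖u - r‖ + b * ‖v - s‖) :=
        add_le_add (hg.2 (Set.mem_univ r) (Set.mem_univ s) ha hb hab)
          (mul_le_mul_of_nonneg_left hnorm hn)
    _ = a * (g r + n * ‖u - r‖) + b * (g s + n * ‖v - s‖) := by ring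

lemma ConvexOn.two_mul_le_add_neg [NormedSpace ℝ E] {h : E → ℝ} (hh : ConvexOn ℝ Set.univ h)
    (u : E) : 2 * h 0 ≤ h u + h (-u) := by
  have := hh.2 (Set.mem_univ u) (Set.mem_univ (-u)) (by norm_num : (0 : ℝ) ≤ 1 / 2)
    (by norm_num : (0 : ℝ) ≤ 1 / 2) (by norm_num)
  rw [smul_neg, add_neg_cancel, smul_eq_mul, smul_eq_mul] at this
  linarith

end InfConvolution

lemma EReal.coe_sub_mul_le_of_ne_top {a c x : ℝ} {J : ℝ≥0∞} (hc : 0 < c)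
    (h : J ≠ ⊤ → a - c * J.toReal ≤ x) : (a : EReal) - (c : EReal) * (J : EReal) ≤ x := by
  rcases eq_or_ne J ⊤ with rfl | hJ
  · rw [EReal.coe_ennreal_top, EReal.coe_mul_top_of_pos hc, EReal.sub_top]
    exact bot_le
  · rw [← EReal.coe_ennreal_toReal hJ]
    exact_mod_cast h hJ

lemma EReal.le_add_mul_toReal_of_ne_top {a c x : ℝ} {J : ℝ≥0∞}
    (h : (x : EReal) ≤ (a : EReal) + (c : EReal) * (J : EReal)) (hJ : J ≠ ⊤) :
    x ≤ a + c * J.toReal := by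
  rw [← EReal.coe_ennreal_toReal hJ] at h
  exact_mod_cast h

theorem stmt_9_general {E : Type*} [MeasurableSpace E] (φ : Measure E)
    (l α β betat C₀ : ℝ) (hl : 0 < l) (hββ : betat ≤ β)
    (hC : 0 ≤ C₀)
    (f : ℝ → Lp ℝ 2 φ → ℝ)
    (hgrow_lb : ∀ (y : ℝ) (u : Lp ℝ 2 φ),
      ((-α - β * |y| : ℝ) : EReal) - ((l⁻¹ : ℝ) : EReal) * (jlam φ l ⇑(-u) : EReal)
        ≤ (f y u : EReal))
    (hgrow_ub : ∀ (y : ℝ) (u : Lp ℝ 2 φ),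
      (f y u : EReal) ≤ ((α + β * |y| : ℝ) : EReal)
        + ((l⁻¹ : ℝ) : EReal) * (jlam φ l ⇑u : EReal))
    (hconv : ∀ y : ℝ, ConvexOn ℝ Set.univ (f y))
    (hlip : ∀ (y y' : ℝ) (u : Lp ℝ 2 φ), |f y u - f y' u| ≤ betat * |y - y'|)
    (hH5 : ∀ u : Lp ℝ 2 φ, -C₀ * ‖u‖ ≤ f 0 u - f 0 0)
    (n : ℝ) (hn : C₀ < n) (y : ℝ) (u : Lp ℝ 2 φ) :
    ((-(3 * α) - 3 * β * |y| : ℝ) : EReal)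
        - ((l⁻¹ : ℝ) : EReal) * (jlam φ l ⇑(-u) : EReal)
        ≤ ((⨅ r : Lp ℝ 2 φ, f y r + n * ‖u - r‖ : ℝ) : EReal) ∧
    (⨅ r : Lp ℝ 2 φ, f y r + n * ‖u - r‖) ≤ f y u ∧
    (f y u : EReal) ≤ ((α + β * |y| : ℝ) : EReal)
        + ((l⁻¹ : ℝ) : EReal) * (jlam φ l ⇑u : EReal) := by
  have hf00 : -α ≤ f 0 0 := by
    have h := hgrow_lb 0 0
    rw [neg_zero, jlam_Lp_zero] at h
    simp only [abs_zero, mul_zero, sub_zero, EReal.coe_ennreal_zero] at h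
    exact_mod_cast h
  have hlow : ∀ r, (-α - betat * |y|) - C₀ * ‖r‖ ≤ f y r := fun r => by
    have hy := (abs_le.1 (hlip y 0 r)).1
    rw [sub_zero] at hy
    linarith [hH5 r]
  have hterm := sub_mul_norm_le_add_mul_norm_sub hC hn.le hlow
  have hbdd : ∀ v, BddBelow (Set.range fun r => f y r + n * ‖v - r‖) :=
    fun v => ⟨_, Set.forall_mem_range.2 (hterm v)⟩
  have hmid := (convexOn_lipInfConv (hconv y) (hC.trans hn.le) hbdd).two_mul_le_add_neg u
  have hL0 : -α - betat * |y| ≤ lipInfConv (f y) n 0 := le_ciInf fun r => by simpa using hterm 0 r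
  have hLneg : lipInfConv (f y) n (-u) ≤ f y (-u) := lipInfConv_le (hbdd _)
  refine ⟨EReal.coe_sub_mul_le_of_ne_top (inv_pos.2 hl) fun hJ => ?_, lipInfConv_le (hbdd u),
    hgrow_ub y u⟩
  have hfu := EReal.le_add_mul_toReal_of_ne_top (hgrow_ub y (-u)) hJ
  have hby : betat * |y| ≤ β * |y| := mul_le_mul_of_nonneg_right hββ (abs_nonneg y)
  change _ ≤ lipInfConv (f y) n u
  linarith

/-- Growth bounds for the Lipschitz inf-convolution approximations of a convex
quadratic-exponential generator satisfying the uniform linear bound condition (H5):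
for `n > C₀`, `−3α − 3β|y| − λ⁻¹ j_λ(−u) ≤ f⁽ⁿ⁾(y,u) ≤ f(y,u) ≤ α + β|y| + λ⁻¹ j_λ(u)`. -/
theorem stmt_9 {E : Type*} [MeasurableSpace E] (φ : Measure E) [IsProbabilityMeasure φ]
    (l α β betat C₀ : ℝ) (hl : 0 < l) (hα : 0 ≤ α) (hβ : 0 ≤ betat) (hββ : betat ≤ β)
    (hC : 0 ≤ C₀)
    (f : ℝ → Lp ℝ 2 φ → ℝ)
    (hgrow_lb : ∀ (y : ℝ) (u : Lp ℝ 2 φ),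
      ((-α - β * |y| : ℝ) : EReal) - ((l⁻¹ : ℝ) : EReal) * (jlam φ l ⇑(-u) : EReal)
        ≤ (f y u : EReal))
    (hgrow_ub : ∀ (y : ℝ) (u : Lp ℝ 2 φ),
      (f y u : EReal) ≤ ((α + β * |y| : ℝ) : EReal)
        + ((l⁻¹ : ℝ) : EReal) * (jlam φ l ⇑u : EReal))
    (hconv : ∀ y : ℝ, ConvexOn ℝ Set.univ (f y))
    (hlip : ∀ (y y' : ℝ) (u : Lp ℝ 2 φ), |f y u - f y' u| ≤ betat * |y - y'|)
    (hH5 : ∀ u : Lp ℝ 2 φ, -C₀ * ‖u‖ ≤ f 0 u - f 0 0)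
    (n : ℝ) (hn : C₀ < n) (y : ℝ) (u : Lp ℝ 2 φ) :
    ((-(3 * α) - 3 * β * |y| : ℝ) : EReal)
        - ((l⁻¹ : ℝ) : EReal) * (jlam φ l ⇑(-u) : EReal)
        ≤ ((⨅ r : Lp ℝ 2 φ, f y r + n * ‖u - r‖ : ℝ) : EReal) ∧
    (⨅ r : Lp ℝ 2 φ, f y r + n * ‖u - r‖) ≤ f y u ∧
    (f y u : EReal) ≤ ((α + β * |y| : ℝ) : EReal)
        + ((l⁻¹ : ℝ) : EReal) * (jlam φ l ⇑u : EReal) :=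
  stmt_9_general φ l α β betat C₀ hl hββ hC f hgrow_lb hgrow_ub hconv hlip hH5 n hn y u
end
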